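/- Let N be a positive integer and let w ∈ ℝ^{2N+1} have entries w_k = min(k+1, 2N+1−k). For k = 0, …, 2N, let A_k ∈ ℂ^{(N+1)×(N+1)} be the matrix with (i,j)-entry equal to 1/w_k if i+j = k and 0 otherwise. Then: (i) for any z ∈ ℂ^{2N+1}, the weighted Hankel matrix Z with Z_{i,j} = z_{i+j}/w_{i+j} equals Σ_{k=0}^{2N} z_k A_k; (ii) Σ_{k=0}^{2N} A_k A_kᴴ is the diagonal matrix whose (i,i)-entry is Σ_{k=i}^{i+N} w_k^{-2}; and (iii) the spectral norm of Σ_{k=0}^{2N} A_k A_kᴴ equals C_w = max_{0 ≤ i ≤ N} Σ_{k=i}^{i+N} w_k^{-2}. -/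

import Mathlib

/-!
Each `A_k A_kᴴ` has `(i, j)`-entry `∑_l [i + l = k] [j + l = k] w_k⁻²`, which vanishes unless
`i = j`; summing over `k`, row `i` collects `w_k⁻²` for `k = i, …, i + N`. The spectral norm of
a diagonal matrix is the largest modulus of its entries, which gives `C_w`.
-/

open Finset Matrix

/-- The spectral norm (largest singular value) of a complex square matrix,
realized as the operator norm of the induced map on `EuclideanSpace`. -/
noncomputable def specNorm {n : ℕ} (M : Matrix (Fin n) (Fin n) ℂ) : ℝ :=
  ‖Matrix.toEuclideanCLM (𝕜 := ℂ) M‖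

/-- The weights `w_k = min(k+1, 2N+1-k)`, i.e. `w = (1,2,…,N+1,N,…,2,1)`. -/
noncomputable def wt (N k : ℕ) : ℝ :=
  min ((k : ℝ) + 1) (2 * (N : ℝ) + 1 - (k : ℝ))

/-- The weighted Hankel matrix of `v ∈ ℂ^{2N+1}`: entries `v_{i+j} / w_{i+j}`. -/
noncomputable def wHankel (N : ℕ) (v : Fin (2 * N + 1) → ℂ) :
    Matrix (Fin (N + 1)) (Fin (N + 1)) ℂ :=
  Matrix.of fun i j =>
    v ⟨(i : ℕ) + (j : ℕ), by have := i.isLt; have := j.isLt; omega⟩ /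
      (wt N ((i : ℕ) + (j : ℕ)) : ℂ)

/-- `C_w = max_{0 ≤ i ≤ N} ∑_{k=i}^{i+N} w_k⁻²`. -/
noncomputable def Cw (N : ℕ) : ℝ :=
  (Finset.range (N + 1)).sup' ⟨0, Finset.mem_range.mpr (Nat.succ_pos N)⟩
    fun i => ∑ k ∈ Finset.Icc i (i + N), ((wt N k)⁻¹) ^ 2

theorem Finset.sum_Icc_add_eq_sum_fin {M : Type*} [AddCommMonoid M] (f : ℕ → M) (i n : ℕ) :
    ∑ k ∈ Icc i (i + n), f k = ∑ l : Fin (n + 1), f (i + l) := by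
  rw [← Finset.Ico_add_one_right_eq_Icc, Finset.sum_Ico_eq_sum_range, add_assoc,
    Nat.add_sub_cancel_left, Fin.sum_univ_eq_sum_range (fun l => f (i + l))]

theorem Fin.sum_ite_val_eq {M : Type*} [AddCommMonoid M] {K n : ℕ} (h : n < K) (f : Fin K → M) :
    ∑ k : Fin K, (if n = k then f k else 0) = f ⟨n, h⟩ := by
  calc ∑ k : Fin K, (if n = k then f k else 0)
      = ∑ k : Fin K, (if (⟨n, h⟩ : Fin K) = k then f k else 0) := by simp only [Fin.ext_iff]
    _ = f ⟨n, h⟩ := by simp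

section Antidiagonal

variable {𝕜 : Type*} {N : ℕ} {A : Fin (2 * N + 1) → Matrix (Fin (N + 1)) (Fin (N + 1)) 𝕜}
  {a : ℕ → 𝕜}

theorem sum_smul_apply_of_antidiagonal [Semiring 𝕜]
    (hA : ∀ k i j, A k i j = if (i : ℕ) + (j : ℕ) = (k : ℕ) then a k else 0)
    (z : Fin (2 * N + 1) → 𝕜) (i j : Fin (N + 1)) :
    (∑ k, z k • A k) i j = z ⟨i + j, by omega⟩ * a (i + j) := by
  simp only [Matrix.sum_apply, Matrix.smul_apply, hA, smul_eq_mul, mul_ite, mul_zero]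
  exact Fin.sum_ite_val_eq (by omega) fun k => z k * a k

theorem sum_mul_conjTranspose_of_antidiagonal [RCLike 𝕜]
    (hA : ∀ k i j, A k i j = if (i : ℕ) + (j : ℕ) = (k : ℕ) then a k else 0) :
    ∑ k, A k * (A k)ᴴ = diagonal fun i : Fin (N + 1) =>
      ((∑ k ∈ Icc (i : ℕ) (i + N), ‖a k‖ ^ 2 : ℝ) : 𝕜) := by
  ext i j
  simp only [Matrix.sum_apply, Matrix.mul_apply, Matrix.conjTranspose_apply, hA, ite_mul, zero_mul]
  rw [Finset.sum_comm]
  have hlt : ∀ l : Fin (N + 1), (i : ℕ) + l < 2 * N + 1 := fun l => by omega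
  simp only [Fin.sum_ite_val_eq (hlt _)]
  rcases eq_or_ne i j with rfl | hij
  · simp [Finset.sum_Icc_add_eq_sum_fin, RCLike.mul_conj]
  · simp [Fin.val_inj, hij, hij.symm]

end Antidiagonal

theorem specNorm_diagonal {n : ℕ} (d : Fin n → ℂ) : specNorm (diagonal d) = ‖d‖ := by
  open scoped Matrix.Norms.L2Operator in exact l2_opNorm_diagonal d

theorem norm_ofReal_eq_sup'_range {f : ℕ → ℝ} (hf : ∀ i, 0 ≤ f i) (n : ℕ) :
    ‖fun i : Fin (n + 1) => (f i : ℂ)‖ = (range (n + 1)).sup' ⟨0, mem_range.mpr n.succ_pos⟩ f := by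
  have hnorm (i : Fin (n + 1)) : ‖(f i : ℂ)‖ = f i := by
    rw [Complex.norm_real, Real.norm_of_nonneg (hf i)]
  refine le_antisymm ((pi_norm_le_iff_of_nonneg ?_).mpr fun i => ?_) (sup'_le _ _ fun i hi => ?_)
  · exact (hf 0).trans (le_sup' f (mem_range.mpr n.succ_pos))
  · exact (hnorm i).trans_le (le_sup' f (mem_range.mpr i.isLt))
  · have := norm_le_pi_norm (fun i : Fin (n + 1) => (f i : ℂ)) ⟨i, mem_range.mp hi⟩
    rwa [hnorm] at this

theorem antidiagonal_matrix_series_general (N : ℕ)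
    (A : Fin (2 * N + 1) → Matrix (Fin (N + 1)) (Fin (N + 1)) ℂ)
    (hA : ∀ (k : Fin (2 * N + 1)) (i j : Fin (N + 1)),
      A k i j = if (i : ℕ) + (j : ℕ) = (k : ℕ) then ((wt N (k : ℕ) : ℂ))⁻¹ else 0) :
    (∀ z : Fin (2 * N + 1) → ℂ, wHankel N z = ∑ k, z k • A k) ∧
    (∑ k, A k * (A k)ᴴ =
      Matrix.diagonal fun i : Fin (N + 1) =>
        ((∑ k ∈ Finset.Icc (i : ℕ) ((i : ℕ) + N), ((wt N k)⁻¹) ^ 2 : ℝ) : ℂ)) ∧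
    specNorm (∑ k, A k * (A k)ᴴ) = Cw N := by
  have hdiag : ∑ k, A k * (A k)ᴴ = Matrix.diagonal fun i : Fin (N + 1) =>
      ((∑ k ∈ Finset.Icc (i : ℕ) ((i : ℕ) + N), ((wt N k)⁻¹) ^ 2 : ℝ) : ℂ) := by
    rw [sum_mul_conjTranspose_of_antidiagonal (a := fun k => ((wt N k : ℂ))⁻¹) hA]
    simp only [← Complex.ofReal_inv, Complex.norm_real, Real.norm_eq_abs, sq_abs]
    rfl
  refine ⟨fun z => ?_, hdiag, ?_⟩
  · ext i j
    rw [sum_smul_apply_of_antidiagonal (a := fun k => ((wt N k : ℂ))⁻¹) hA]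
    simp [wHankel, div_eq_mul_inv]
  · rw [hdiag, specNorm_diagonal]
    unfold Cw
    exact norm_ofReal_eq_sup'_range (f := fun i => ∑ k ∈ Icc i (i + N), (wt N k)⁻¹ ^ 2)
      (fun i => sum_nonneg fun k _ => sq_nonneg _) N

/-- with `A_k` the matrix supported on the `k`-th anti-diagonal with
entries `1/w_k`, (i) the weighted Hankel matrix of `z` is `∑ₖ zₖ Aₖ`; (ii)
`∑ₖ Aₖ Aₖᴴ` is diagonal with `(i,i)`-entry `∑_{k=i}^{i+N} w_k⁻²`; and (iii) its
spectral norm is `C_w`. -/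
theorem antidiagonal_matrix_series (N : ℕ) (hN : 0 < N)
    (A : Fin (2 * N + 1) → Matrix (Fin (N + 1)) (Fin (N + 1)) ℂ)
    (hA : ∀ (k : Fin (2 * N + 1)) (i j : Fin (N + 1)),
      A k i j = if (i : ℕ) + (j : ℕ) = (k : ℕ) then ((wt N (k : ℕ) : ℂ))⁻¹ else 0) :
    (∀ z : Fin (2 * N + 1) → ℂ, wHankel N z = ∑ k, z k • A k) ∧
    (∑ k, A k * (A k)ᴴ =
      Matrix.diagonal fun i : Fin (N + 1) =>
        ((∑ k ∈ Finset.Icc (i : ℕ) ((i : ℕ) + N), ((wt N k)⁻¹) ^ 2 : ℝ) : ℂ)) ∧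
    specNorm (∑ k, A k * (A k)ᴴ) = Cw N :=
  antidiagonal_matrix_series_general N A hA
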